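/- arXiv:2501.03865 — 2 statements merged into one kernel-verified Lean document; each statement's English description precedes it below -/
import Mathlib

section
/- For x ≥ 0 and Z a Gaussian random variable with mean μ and variance σ², the tail probability satisfies √(2/π)·e^{-x²/2}/(x+√(x²+8/π)) ≥ P(Z > μ + xσ) ≥ √(2/π)·e^{-x²/2}/(x+√(x²+4)). -/
/-!
After standardizing, both bounds compare the standard normal tail `Q` with
`h_c(x) = √(2/π) e^{-x²/2} / (x + √(x² + c))` for `c = 4` and `c = 8/π`. Both `Q` and `h_c`
vanish at `+∞`, and since `(log (x + √(x² + c)))' = 1/√(x² + c)`,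
`(Q - h_c)'(x) = -φ(x) ((c - 2)√(x² + c) - 2x) / (√(x² + c) (x + √(x² + c))²)`.
For `c = 4` the bracket is positive, so `Q - h_4` decreases to `0` and is nonnegative.
For `c ≤ 4` the bracket is antitone on `[0, ∞)`, so `Q - h_c` first decreases and then increases
to `0`; it is therefore nonpositive on `[0, ∞)` as soon as it vanishes at `0`, which is what
`c = 8/π` achieves: `h_c(0) = √(2/π)/√c = 1/2 = Q(0)`.
-/

open ProbabilityTheory Real MeasureTheory Filter Set Topology
open scoped NNReal

section TailIntegral

variable {E : Type*} [NormedAddCommGroup E] [NormedSpace ℝ E] {f : ℝ → E}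

lemma integral_Ioi_eq_sub_intervalIntegral (hf : Integrable f) (x : ℝ) :
    ∫ t in Ioi x, f t = (∫ t in Ioi 0, f t) - ∫ t in 0..x, f t := by
  rw [← intervalIntegral.integral_Ioi_sub_Ioi' hf.integrableOn hf.integrableOn, sub_sub_cancel]

lemma hasDerivAt_integral_Ioi [CompleteSpace E] (hf : Integrable f) (hfc : Continuous f) (x : ℝ) :
    HasDerivAt (fun y ↦ ∫ t in Ioi y, f t) (-f x) x := by
  rw [funext (integral_Ioi_eq_sub_intervalIntegral hf)]
  exact (intervalIntegral.integral_hasDerivAt_right hf.intervalIntegrable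
    hfc.aestronglyMeasurable.stronglyMeasurableAtFilter hfc.continuousAt).const_sub _

lemma tendsto_integral_Ioi_atTop (hf : Integrable f) :
    Tendsto (fun x ↦ ∫ t in Ioi x, f t) atTop (𝓝 0) := by
  rw [funext (integral_Ioi_eq_sub_intervalIntegral hf)]
  simpa using (intervalIntegral_tendsto_integral_Ioi 0 hf.integrableOn tendsto_id).const_sub
    (∫ t in Ioi 0, f t)

end TailIntegral

lemma gaussianReal_real_Ioi (μ : ℝ) {v : ℝ≥0} (hv : v ≠ 0) (x : ℝ) :
    (gaussianReal μ v).real (Ioi x) = ∫ t in Ioi x, gaussianPDFReal μ v t := by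
  rw [measureReal_def, gaussianReal_apply_eq_integral μ hv, ENNReal.toReal_ofReal]
  exact setIntegral_nonneg measurableSet_Ioi fun t _ ↦ gaussianPDFReal_nonneg μ v t

lemma hasDerivAt_gaussianReal_real_Ioi (μ : ℝ) {v : ℝ≥0} (hv : v ≠ 0) (x : ℝ) :
    HasDerivAt (fun y ↦ (gaussianReal μ v).real (Ioi y)) (-gaussianPDFReal μ v x) x := by
  simp_rw [gaussianReal_real_Ioi μ hv]
  exact hasDerivAt_integral_Ioi (integrable_gaussianPDFReal μ v)
    (by unfold gaussianPDFReal; fun_prop) x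

lemma tendsto_gaussianReal_real_Ioi_atTop (μ : ℝ) {v : ℝ≥0} (hv : v ≠ 0) :
    Tendsto (fun x ↦ (gaussianReal μ v).real (Ioi x)) atTop (𝓝 0) := by
  simp_rw [gaussianReal_real_Ioi μ hv]
  exact tendsto_integral_Ioi_atTop (integrable_gaussianPDFReal μ v)

lemma gaussianReal_real_Ioi_self (μ : ℝ) {v : ℝ≥0} (hv : v ≠ 0) :
    (gaussianReal μ v).real (Ioi μ) = 1 / 2 := by
  have : NullSingletonClass (gaussianReal μ v) := nullSingletonClass_gaussianReal hv
  have hsymm : (gaussianReal μ v).real (Iio μ) = (gaussianReal μ v).real (Ioi μ) := by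
    have hreflect : (gaussianReal μ v).map (2 * μ - ·) = gaussianReal μ v := by
      rw [gaussianReal_map_const_sub]; ring_nf
    conv_rhs => rw [← hreflect]
    rw [map_measureReal_apply (by fun_prop) measurableSet_Ioi]
    congr 1
    ext z
    simp only [mem_Iio, mem_preimage, mem_Ioi]
    constructor <;> intro h <;> linarith
  have htot :=
    measureReal_add_measureReal_compl (μ := gaussianReal μ v) (measurableSet_Ioi (a := μ))
  rw [compl_Ioi, measureReal_congr Iio_ae_eq_Iic.symm, hsymm, probReal_univ] at htot
  linarith

lemma gaussianReal_Ioi_add_mul (μ x : ℝ) {σ : ℝ} (hσ : 0 < σ) :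
    gaussianReal μ (σ ^ 2).toNNReal (Ioi (μ + x * σ)) = gaussianReal 0 1 (Ioi x) := by
  have hmap :
      gaussianReal μ (σ ^ 2).toNNReal = (gaussianReal 0 1).map (fun z ↦ σ * z + μ) := by
    rw [show (fun z ↦ σ * z + μ) = (· + μ) ∘ (σ * ·) from rfl,
      ← Measure.map_map (measurable_add_const μ) (measurable_const_mul σ),
      gaussianReal_map_const_mul σ, gaussianReal_map_add_const μ]
    congr 1
    · ring
    · ext
      simp [Real.coe_toNNReal _ (sq_nonneg σ)]
  rw [hmap, Measure.map_apply (by fun_prop) measurableSet_Ioi]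
  congr 1
  ext z
  simp only [mem_preimage, mem_Ioi]
  constructor <;> intro h <;> nlinarith

lemma gaussianPDFReal_zero_one (x : ℝ) :
    gaussianPDFReal 0 1 x = √(2 / π) / 2 * exp (-x ^ 2 / 2) := by
  have h2 : √(2 * π) * √(2 / π) = 2 := by
    rw [← Real.sqrt_mul (by positivity), show 2 * π * (2 / π) = 2 ^ 2 by field_simp,
      Real.sqrt_sq zero_le_two]
  have hinv : (√(2 * π))⁻¹ = √(2 / π) / 2 :=
    inv_eq_of_mul_eq_one_right (by rw [← mul_div_assoc, h2, div_self two_ne_zero])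
  simp only [gaussianPDFReal, NNReal.coe_one, mul_one, sub_zero, hinv]

section TailBound

variable {c : ℝ}

lemma add_sqrt_sq_add_pos (hc : 0 < c) (x : ℝ) : 0 < x + √(x ^ 2 + c) := by
  have hs := Real.sq_sqrt (by positivity : 0 ≤ x ^ 2 + c)
  nlinarith [Real.sqrt_nonneg (x ^ 2 + c)]

lemma sqrt_sq_add_sub_sqrt_sq_add_le (hc : 0 ≤ c) {x y : ℝ} (hx : 0 ≤ x) (hxy : x ≤ y) :
    √(y ^ 2 + c) - √(x ^ 2 + c) ≤ y - x := by
  have hs := Real.sq_sqrt (by positivity : 0 ≤ x ^ 2 + c)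
  have hsx : x ≤ √(x ^ 2 + c) := Real.le_sqrt_of_sq_le (by linarith)
  rw [sub_le_iff_le_add, Real.sqrt_le_left (by linarith)]
  nlinarith

lemma antitoneOn_mul_sqrt_sq_add_sub_mul (hc0 : 0 ≤ c) (hc4 : c ≤ 4) :
    AntitoneOn (fun y ↦ (c - 2) * √(y ^ 2 + c) - 2 * y) (Ici 0) := by
  intro x hx y _ hxy
  have hlip := sqrt_sq_add_sub_sqrt_sq_add_le hc0 hx hxy
  have hmono : √(x ^ 2 + c) ≤ √(y ^ 2 + c) := Real.sqrt_le_sqrt (by nlinarith [mem_Ici.1 hx])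
  dsimp only
  rcases le_total c 2 with h | h <;> nlinarith

noncomputable def gaussianTailBound (c x : ℝ) : ℝ :=
  √(2 / π) * exp (-x ^ 2 / 2) / (x + √(x ^ 2 + c))

lemma hasDerivAt_gaussianTailBound (hc : 0 < c) (x : ℝ) :
    HasDerivAt (gaussianTailBound c) (-(x + (√(x ^ 2 + c))⁻¹) * gaussianTailBound c x) x := by
  have hd := add_sqrt_sq_add_pos hc x
  have hnum : HasDerivAt (fun y ↦ √(2 / π) * exp (-y ^ 2 / 2))
      (√(2 / π) * (exp (-x ^ 2 / 2) * (-(2 * x) / 2))) x := by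
    simpa using (((hasDerivAt_pow 2 x).neg.div_const 2).exp).const_mul (√(2 / π))
  have hden : HasDerivAt (fun y ↦ y + √(y ^ 2 + c)) (1 + 2 * x / (2 * √(x ^ 2 + c))) x := by
    simpa using (hasDerivAt_id' x).fun_add
      (((hasDerivAt_pow 2 x).add_const c).sqrt (by positivity))
  refine (hnum.fun_div hden hd.ne').congr_deriv ?_
  rw [gaussianTailBound]
  field_simp
  ring

lemma hasDerivAt_gaussianReal_real_Ioi_sub_gaussianTailBound (hc : 0 < c) (x : ℝ) :
    HasDerivAt (fun y ↦ (gaussianReal 0 1).real (Ioi y) - gaussianTailBound c y)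
      (-(gaussianPDFReal 0 1 x / (√(x ^ 2 + c) * (x + √(x ^ 2 + c)) ^ 2) *
        ((c - 2) * √(x ^ 2 + c) - 2 * x))) x := by
  refine ((hasDerivAt_gaussianReal_real_Ioi 0 one_ne_zero x).sub
    (hasDerivAt_gaussianTailBound hc x)).congr_deriv ?_
  have hd := add_sqrt_sq_add_pos hc x
  have hsq := Real.sq_sqrt (by positivity : 0 ≤ x ^ 2 + c)
  rw [gaussianTailBound, gaussianPDFReal_zero_one]
  field_simp
  linear_combination (-√(x ^ 2 + c)) * hsq

lemma tendsto_gaussianTailBound_atTop (c : ℝ) : Tendsto (gaussianTailBound c) atTop (𝓝 0) := by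
  have hexp : Tendsto (fun x : ℝ ↦ exp (-x ^ 2 / 2)) atTop (𝓝 0) := by
    refine tendsto_exp_atBot.comp ?_
    simpa only [neg_div, Function.comp_def] using
      tendsto_neg_atTop_atBot.comp ((tendsto_pow_atTop two_ne_zero).atTop_div_const two_pos)
  have hden : Tendsto (fun x : ℝ ↦ x + √(x ^ 2 + c)) atTop atTop :=
    tendsto_atTop_mono (fun x ↦ le_add_of_nonneg_right (Real.sqrt_nonneg _)) tendsto_id
  exact (hexp.const_mul (√(2 / π))).div_atTop hden

lemma tendsto_gaussianReal_real_Ioi_sub_gaussianTailBound (c : ℝ) :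
    Tendsto (fun x ↦ (gaussianReal 0 1).real (Ioi x) - gaussianTailBound c x) atTop (𝓝 0) := by
  simpa using
    (tendsto_gaussianReal_real_Ioi_atTop 0 one_ne_zero).sub (tendsto_gaussianTailBound_atTop c)

lemma gaussianTailBound_eight_div_pi_zero : gaussianTailBound (8 / π) 0 = 1 / 2 := by
  have hquot : 2 / π / (8 / π) = (1 / 2) ^ 2 := by field_simp; norm_num
  rw [gaussianTailBound, zero_pow two_ne_zero, neg_zero, zero_div, exp_zero, mul_one, zero_add,
    zero_add, ← Real.sqrt_div' _ (by positivity), hquot, Real.sqrt_sq (by norm_num)]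

end TailBound

lemma nonneg_of_hasDerivAt_nonpos_of_tendsto_zero {f f' : ℝ → ℝ} {a : ℝ}
    (hf : ∀ x, HasDerivAt f (f' x) x) (hf' : ∀ x, a < x → f' x ≤ 0)
    (hlim : Tendsto f atTop (𝓝 0)) : 0 ≤ f a := by
  have hanti : AntitoneOn f (Ici a) :=
    antitoneOn_of_hasDerivWithinAt_nonpos (convex_Ici a)
      (fun x _ ↦ (hf x).continuousAt.continuousWithinAt) (fun x _ ↦ (hf x).hasDerivWithinAt)
      (by rw [interior_Ici]; exact hf')
  exact le_of_tendsto hlim ((eventually_ge_atTop a).mono fun x hx ↦ hanti self_mem_Ici hx hx)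

lemma gaussianTailBound_four_le_gaussianReal_real_Ioi (x : ℝ) :
    gaussianTailBound 4 x ≤ (gaussianReal 0 1).real (Ioi x) := by
  have hsign : ∀ y, 0 ≤ (4 - 2) * √(y ^ 2 + 4) - 2 * y := fun y ↦ by
    have : y ≤ √(y ^ 2 + 4) := Real.le_sqrt_of_sq_le (by linarith)
    linarith
  refine sub_nonneg.1 (nonneg_of_hasDerivAt_nonpos_of_tendsto_zero (a := x)
    (hasDerivAt_gaussianReal_real_Ioi_sub_gaussianTailBound four_pos) (fun y _ ↦ ?_)
    (tendsto_gaussianReal_real_Ioi_sub_gaussianTailBound 4))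
  exact neg_nonpos.2 (mul_nonneg (div_nonneg (gaussianPDFReal_nonneg 0 1 y) (by positivity))
    (hsign y))

lemma gaussianReal_real_Ioi_le_gaussianTailBound_eight_div_pi {x : ℝ} (hx : 0 ≤ x) :
    (gaussianReal 0 1).real (Ioi x) ≤ gaussianTailBound (8 / π) x := by
  set c := 8 / π
  have hc : 0 < c := by positivity
  have hc4 : c ≤ 4 := by rw [div_le_iff₀ pi_pos]; linarith [pi_gt_three]
  set D := fun y ↦ (gaussianReal 0 1).real (Ioi y) - gaussianTailBound c y
  set g := fun y ↦ (c - 2) * √(y ^ 2 + c) - 2 * y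
  have hD : ∀ y, HasDerivAt D
      (-(gaussianPDFReal 0 1 y / (√(y ^ 2 + c) * (y + √(y ^ 2 + c)) ^ 2) * g y)) y :=
    hasDerivAt_gaussianReal_real_Ioi_sub_gaussianTailBound hc
  have hlim : Tendsto D atTop (𝓝 0) := tendsto_gaussianReal_real_Ioi_sub_gaussianTailBound c
  have hw : ∀ y, 0 ≤ gaussianPDFReal 0 1 y / (√(y ^ 2 + c) * (y + √(y ^ 2 + c)) ^ 2) :=
    fun y ↦ div_nonneg (gaussianPDFReal_nonneg 0 1 y) (by positivity)
  have hg : AntitoneOn g (Ici 0) := antitoneOn_mul_sqrt_sq_add_sub_mul hc.le hc4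
  rw [← sub_nonpos]
  change D x ≤ 0
  rcases le_total 0 (g x) with hgx | hgx
  · have hanti : AntitoneOn D (Icc 0 x) :=
      antitoneOn_of_hasDerivWithinAt_nonpos (convex_Icc 0 x)
        (fun y _ ↦ (hD y).continuousAt.continuousWithinAt) (fun y _ ↦ (hD y).hasDerivWithinAt)
        fun y hy ↦ by
          rw [interior_Icc] at hy
          exact neg_nonpos.2 (mul_nonneg (hw y) (hgx.trans (hg hy.1.le hx hy.2.le)))
    calc D x ≤ D 0 := hanti ⟨le_rfl, hx⟩ ⟨hx, le_rfl⟩ hx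
      _ = 0 := by
        simp only [D, gaussianReal_real_Ioi_self 0 one_ne_zero, c,
          gaussianTailBound_eight_div_pi_zero, sub_self]
  · have := nonneg_of_hasDerivAt_nonpos_of_tendsto_zero (a := x) (fun y ↦ (hD y).fun_neg)
      (fun y hy ↦ neg_nonpos.2 (neg_nonneg.2 (mul_nonpos_of_nonneg_of_nonpos (hw y)
        ((hg hx (hx.trans hy.le) hy.le).trans hgx))))
      (by simpa only [neg_zero] using hlim.neg)
    linarith

/-- Gaussian tail bound (Abramowitz–Stegun type): for `x ≥ 0` and `Z ~ N(μ, σ²)`,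
`√(2/π)·e^{-x²/2}/(x+√(x²+8/π)) ≥ P(Z > μ + xσ) ≥ √(2/π)·e^{-x²/2}/(x+√(x²+4))`. -/
theorem stmt0 (μ σ x : ℝ) (hσ : 0 < σ) (hx : 0 ≤ x) :
    Real.sqrt (2 / π) * Real.exp (-x ^ 2 / 2) / (x + Real.sqrt (x ^ 2 + 8 / π)) ≥
      ((gaussianReal μ (Real.toNNReal (σ ^ 2))) {z | μ + x * σ < z}).toReal ∧
    ((gaussianReal μ (Real.toNNReal (σ ^ 2))) {z | μ + x * σ < z}).toReal ≥
      Real.sqrt (2 / π) * Real.exp (-x ^ 2 / 2) / (x + Real.sqrt (x ^ 2 + 4)) := by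
  change gaussianTailBound (8 / π) x ≥
      (gaussianReal μ (σ ^ 2).toNNReal (Ioi (μ + x * σ))).toReal ∧
    (gaussianReal μ (σ ^ 2).toNNReal (Ioi (μ + x * σ))).toReal ≥ gaussianTailBound 4 x
  rw [gaussianReal_Ioi_add_mul μ x hσ]
  exact ⟨gaussianReal_real_Ioi_le_gaussianTailBound_eight_div_pi hx,
    gaussianTailBound_four_le_gaussianReal_real_Ioi x⟩
end

section
/- Let p, q ∈ Δ^K be probability distributions over K arms, let Θ be a d×K matrix of arm parameters, χ ∈ ℝ^d a context, and let α, α' be two distinct arms with k̲ an arm minimizing χᵀθ̂_k. If χᵀΘ(p − q) < 0 then p_α + q_{α'} ≤ 2 − (χᵀθ̂_α − χᵀθ̂_{α'})/(χᵀθ̂_α − χᵀθ̂_{k̲} + max_{k≠α,α'} χᵀ(θ̂_k − θ̂_{k̲})), provided χᵀθ̂_α > χᵀθ̂_{α'} and the denominator is positive. -/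
open Matrix

/-- Conflict inequality (key step of Lemma 6.2): with `θ k = χᵀθ̂_k`, `k̲` a minimizer of
`θ`, distinct arms `α, α'` with `θ α > θ α'` and positive denominator, if
`χᵀΘ(p − q) < 0` for simplex vectors `p, q`, then
`p_α + q_{α'} ≤ 2 − (θ α − θ α')/(θ α − θ k̲ + max_{k≠α,α'}(θ k − θ k̲))`. -/
theorem stmt14 {d K : ℕ} (Θ : Matrix (Fin d) (Fin K) ℝ) (χ : Fin d → ℝ)
    (θ : Fin K → ℝ) (hθ : ∀ k, θ k = χ ⬝ᵥ (fun i => Θ i k))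
    (p q : Fin K → ℝ)
    (hp0 : ∀ k, 0 ≤ p k) (hp1 : ∑ k, p k = 1)
    (hq0 : ∀ k, 0 ≤ q k) (hq1 : ∑ k, q k = 1)
    (α α' kbar : Fin K) (hαα' : α ≠ α')
    (hmin : ∀ k, θ kbar ≤ θ k)
    (hS : ((Finset.univ.erase α).erase α').Nonempty)
    (hord : θ α' < θ α)
    (hden : 0 < θ α - θ kbar +
      ((Finset.univ.erase α).erase α').sup' hS (fun k => θ k - θ kbar))
    (hlt : χ ⬝ᵥ (Θ *ᵥ fun k => p k - q k) < 0) :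
    p α + q α' ≤ 2 - (θ α - θ α') /
      (θ α - θ kbar +
        ((Finset.univ.erase α).erase α').sup' hS (fun k => θ k - θ kbar)) := by
  set S := (Finset.univ.erase α).erase α' with hSdef
  set M := S.sup' hS (fun k => θ k - θ kbar) with hMdef
  have hα'mem : α' ∈ Finset.univ.erase α :=
    Finset.mem_erase.2 ⟨hαα'.symm, Finset.mem_univ _⟩
  -- dot product as a sum
  have hdot : χ ⬝ᵥ (Θ *ᵥ fun k => p k - q k) = ∑ k, θ k * (p k - q k) := by
    rw [dotProduct_mulVec]
    simp only [vecMul, dotProduct, hθ]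
  have hz : ∑ k, (p k - q k) = 0 := by
    rw [Finset.sum_sub_distrib, hp1, hq1]; ring
  have hsum : ∑ k, (θ k - θ kbar) * (p k - q k) < 0 := by
    have h1 : ∑ k, (θ k - θ kbar) * (p k - q k)
        = ∑ k, θ k * (p k - q k) - θ kbar * ∑ k, (p k - q k) := by
      rw [Finset.mul_sum, ← Finset.sum_sub_distrib]
      exact Finset.sum_congr rfl fun k _ => by ring
    rw [h1, hz, mul_zero, sub_zero, ← hdot]; exact hlt
  -- split the sum
  have hsplit : ∑ k, (θ k - θ kbar) * (p k - q k)
      = (θ α - θ kbar) * (p α - q α) + ((θ α' - θ kbar) * (p α' - q α')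
        + ∑ k ∈ S, (θ k - θ kbar) * (p k - q k)) := by
    rw [← Finset.add_sum_erase _ _ (Finset.mem_univ α),
        ← Finset.add_sum_erase _ _ hα'mem]
  have hqsplit : (1 : ℝ) = q α + (q α' + ∑ k ∈ S, q k) := by
    rw [← hq1, ← Finset.add_sum_erase _ q (Finset.mem_univ α),
        ← Finset.add_sum_erase _ q hα'mem]
  have hqS : ∑ k ∈ S, q k = 1 - q α - q α' := by linarith
  -- bound on the tail sum
  have hSbound : -(M * (1 - q α - q α')) ≤ ∑ k ∈ S, (θ k - θ kbar) * (p k - q k) := by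
    rw [← hqS, Finset.mul_sum, ← Finset.sum_neg_distrib]
    apply Finset.sum_le_sum
    intro k hk
    have hg : 0 ≤ θ k - θ kbar := sub_nonneg.2 (hmin k)
    have hgM : θ k - θ kbar ≤ M := Finset.le_sup' (fun k => θ k - θ kbar) hk
    nlinarith [hp0 k, hq0 k]
  have hM0 : 0 ≤ M := by
    obtain ⟨k, hk⟩ := hS
    exact le_trans (sub_nonneg.2 (hmin k)) (Finset.le_sup' (fun k => θ k - θ kbar) hk)
  have hqSnn : 0 ≤ ∑ k ∈ S, q k := Finset.sum_nonneg fun k _ => hq0 k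
  have hpα : p α ≤ 1 := by
    rw [← hp1]
    exact Finset.single_le_sum (fun k _ => hp0 k) (Finset.mem_univ α)
  have key : (θ α - θ kbar) * (p α - q α) + (θ α' - θ kbar) * (p α' - q α')
      - M * (1 - q α - q α') < 0 := by
    rw [hsplit] at hsum; linarith
  have hb : 0 ≤ θ α' - θ kbar := sub_nonneg.2 (hmin α')
  have hqα'1 : q α' ≤ 1 := by linarith [hq0 α]
  have h2 : (θ α - θ α') / (θ α - θ kbar + M) ≤ 2 - (p α + q α') := by
    rw [div_le_iff₀ hden]
    nlinarith [mul_nonneg hM0 (sub_nonneg.2 hpα), mul_nonneg hM0 (hq0 α),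
      mul_nonneg hb (sub_nonneg.2 hqα'1), mul_nonneg hb (hp0 α'),
      mul_nonneg (sub_nonneg.2 (hmin α)) (hq0 α),
      mul_nonneg (sub_nonneg.2 (hmin α)) (hq0 α')]
  linarith
end
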